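/- Let Ω be a region (nonempty open connected subset) of ℂ and let F : Ω → M_n(ℂ) be a nonconstant analytic function. If there is z₀ ∈ Ω such that for every k = 1, …, n the function z ↦ s_k(F(z)) attains its minimum value over Ω at z₀, then the matrix F(z₀) is not invertible. -/

import Mathlib

/-!
The product of the singular values of `A` is `‖det A‖`, so `‖det F‖` attains its minimum over `Ω`
at `z₀`. If `F z₀` were invertible, the minimum modulus principle would make `‖det F‖` constant,
and since every `s_k(F z)` dominates `s_k(F z₀)` with the same positive product, all singular
values would be constant. Then so is `∑ s_k² = ‖F z‖²` (Frobenius norm), and a holomorphic map into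
the strictly convex space `ℂ^{n×n}` of constant norm is constant by the maximum modulus principle.
-/

open scoped Matrix

/-- The Euclidean norm of a vector in `ℂⁿ`. -/
noncomputable def euclNorm {n : ℕ} (x : Fin n → ℂ) : ℝ :=
  Real.sqrt (∑ i, ‖x i‖ ^ 2)

/-- The operator norm of a complex `n × n` matrix induced by the Euclidean norm on `ℂⁿ`. -/
noncomputable def opNorm {n : ℕ} (A : Matrix (Fin n) (Fin n) ℂ) : ℝ :=
  ‖(Matrix.toEuclideanCLM (𝕜 := ℂ) A : EuclideanSpace ℂ (Fin n) →L[ℂ] EuclideanSpace ℂ (Fin n))‖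

/-- `sval A k` is the `(k+1)`-st singular value `s_{k+1}(A)` of `A`: the nonnegative square
roots of the eigenvalues of `Aᴴ * A`, listed in nonincreasing order.  In particular
`sval A 0 = s₁(A)` is the largest singular value (the operator norm) and
`sval A (n-1) = sₙ(A)` is the smallest. -/
noncomputable def sval {n : ℕ} (A : Matrix (Fin n) (Fin n) ℂ) (k : Fin n) : ℝ :=
  let f : Fin n → ℝ := fun i =>
    Real.sqrt ((Matrix.isHermitian_conjTranspose_mul_self A).eigenvalues i)
  (f ∘ Tuple.sort f) k.rev

/-- The Frobenius (Hilbert--Schmidt) norm of a complex matrix: `‖T‖_F = (trace (Tᴴ T))^{1/2}`. -/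
noncomputable def frobNorm {n : ℕ} (A : Matrix (Fin n) (Fin n) ℂ) : ℝ :=
  Real.sqrt ((Matrix.trace (Aᴴ * A)).re)

attribute [local instance] Matrix.normedAddCommGroup Matrix.normedSpace

open Set Function

theorem Complex.eqOn_of_isPreconnected_of_isMinOn_norm {E : Type*} [NormedAddCommGroup E]
    [NormedSpace ℂ E] {f : E → ℂ} {U : Set E} {c : E} (hc : IsPreconnected U) (ho : IsOpen U)
    (hd : DifferentiableOn ℂ f U) (hcU : c ∈ U) (hfc : f c ≠ 0)
    (hm : IsMinOn (norm ∘ f) U c) : EqOn f (const E (f c)) U := by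
  have hfc_pos : 0 < ‖f c‖ := norm_pos_iff.2 hfc
  have hf : ∀ z ∈ U, f z ≠ 0 := fun z hz => norm_pos_iff.1 (hfc_pos.trans_le (hm hz))
  have hinv_max : IsMaxOn (norm ∘ f⁻¹) U c := fun z hz => by
    simpa only [mem_ofPred_eq, comp_apply, Pi.inv_apply, norm_inv] using
      inv_anti₀ hfc_pos (hm hz)
  have hinv := eqOn_of_isPreconnected_of_isMaxOn_norm hc ho (hd.inv hf) hcU hinv_max
  exact fun z hz => inv_injective (hinv hz)

theorem DifferentiableAt.matrix_det {𝕜 E ι : Type*} [NontriviallyNormedField 𝕜]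
    [NormedAddCommGroup E] [NormedSpace 𝕜 E] [Fintype ι] [DecidableEq ι]
    {F : E → Matrix ι ι 𝕜} {x : E} (h : DifferentiableAt 𝕜 F x) :
    DifferentiableAt 𝕜 (fun y => (F y).det) x := by
  simp only [Matrix.det_apply']
  have hentry (i j : ι) : DifferentiableAt 𝕜 (fun y => F y i j) x :=
    differentiableAt_pi.1 (differentiableAt_pi.1 h i) j
  exact DifferentiableAt.fun_sum fun σ _ =>
    (HasFDerivAt.finsetProd fun i _ => (hentry (σ i) i).hasFDerivAt).differentiableAt.const_mul _

namespace Matrix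

variable {𝕜 m n : Type*}

noncomputable def euclideanVec (A : Matrix m n 𝕜) : EuclideanSpace 𝕜 (n × m) :=
  WithLp.toLp 2 A.vec

theorem euclideanVec_injective : Injective (euclideanVec : Matrix m n 𝕜 → _) :=
  (WithLp.toLp_injective 2).comp vec_bijective.injective

theorem _root_.DifferentiableAt.matrix_euclideanVec [RCLike 𝕜] {E : Type*} [NormedAddCommGroup E]
    [NormedSpace 𝕜 E] [Fintype m] [Fintype n] {F : E → Matrix m n 𝕜} {x : E}
    (h : DifferentiableAt 𝕜 F x) : DifferentiableAt 𝕜 (fun y => (F y).euclideanVec) x :=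
  differentiableAt_euclidean.2 fun p => differentiableAt_pi.1 (differentiableAt_pi.1 h p.2) p.1

end Matrix

section SingularValues

variable {n : ℕ}

lemma sval_nonneg (A : Matrix (Fin n) (Fin n) ℂ) (k : Fin n) : 0 ≤ sval A k :=
  Real.sqrt_nonneg _

lemma exists_perm_sval_eq_sqrt_eigenvalues (A : Matrix (Fin n) (Fin n) ℂ) :
    ∃ σ : Equiv.Perm (Fin n), ∀ k,
      sval A k = √((Matrix.isHermitian_conjTranspose_mul_self A).eigenvalues (σ k)) :=
  ⟨Fin.revPerm.trans (Tuple.sort _), fun _ => rfl⟩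

lemma prod_sval_eq_norm_det (A : Matrix (Fin n) (Fin n) ℂ) : ∏ k, sval A k = ‖A.det‖ := by
  have hA := Matrix.isHermitian_conjTranspose_mul_self A
  obtain ⟨σ, hσ⟩ := exists_perm_sval_eq_sqrt_eigenvalues A
  have hdet : ∏ i, hA.eigenvalues i = Complex.normSq A.det := by
    have h := hA.det_eq_prod_eigenvalues
    rw [Matrix.det_mul, Matrix.det_conjTranspose, Complex.star_def,
      ← Complex.normSq_eq_conj_mul_self] at h
    exact Complex.ofReal_injective (by push_cast; exact h.symm)
  simp_rw [hσ]
  rw [Equiv.prod_comp σ (fun i => √(hA.eigenvalues i)), ← Real.sqrt_prod _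
    (fun i _ => Matrix.eigenvalues_conjTranspose_mul_self_nonneg A i), hdet, Complex.norm_def]

lemma sum_sval_sq_eq_norm_euclideanVec_sq (A : Matrix (Fin n) (Fin n) ℂ) :
    ∑ k, sval A k ^ 2 = ‖A.euclideanVec‖ ^ 2 := by
  have hA := Matrix.isHermitian_conjTranspose_mul_self A
  obtain ⟨σ, hσ⟩ := exists_perm_sval_eq_sqrt_eigenvalues A
  have htrace : ∑ i, hA.eigenvalues i = ‖A.euclideanVec‖ ^ 2 := by
    have h := hA.trace_eq_sum_eigenvalues
    rw [← Matrix.star_vec_dotProduct_vec, dotProduct_comm, ← WithLp.ofLp_toLp 2 A.vec,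
      ← EuclideanSpace.inner_eq_star_dotProduct, inner_self_eq_norm_sq_to_K] at h
    exact_mod_cast h.symm
  simp_rw [hσ]
  rw [Equiv.sum_comp σ (fun i => √(hA.eigenvalues i) ^ 2), ← htrace]
  exact Finset.sum_congr rfl fun i _ =>
    Real.sq_sqrt (Matrix.eigenvalues_conjTranspose_mul_self_nonneg A i)

variable {A B : Matrix (Fin n) (Fin n) ℂ}

lemma norm_det_le_of_sval_le (h : ∀ k, sval A k ≤ sval B k) : ‖A.det‖ ≤ ‖B.det‖ := by
  simpa only [prod_sval_eq_norm_det] using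
    Finset.prod_le_prod (s := Finset.univ) (fun k _ => sval_nonneg A k) (fun k _ => h k)

lemma sval_eq_of_sval_le_of_norm_det_eq (h : ∀ k, sval A k ≤ sval B k) (hA : A.det ≠ 0)
    (hdet : ‖A.det‖ = ‖B.det‖) : sval A = sval B := by
  have hpos : ∀ k, 0 < sval A k := fun k => (sval_nonneg A k).lt_of_ne fun h0 => hA <|
    norm_eq_zero.1 (prod_sval_eq_norm_det A ▸ Finset.prod_eq_zero (Finset.mem_univ k) h0.symm)
  by_contra hne
  obtain ⟨k, hk⟩ := Function.ne_iff.1 hne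
  have := Finset.prod_lt_prod (fun k _ => hpos k) (fun k _ => h k)
    ⟨k, Finset.mem_univ k, (h k).lt_of_ne hk⟩
  rw [prod_sval_eq_norm_det, prod_sval_eq_norm_det, hdet] at this
  exact this.false

lemma norm_euclideanVec_eq_of_sval_eq (h : sval A = sval B) :
    ‖A.euclideanVec‖ = ‖B.euclideanVec‖ :=
  (pow_left_inj₀ (norm_nonneg _) (norm_nonneg _) two_ne_zero).1 <| by
    rw [← sum_sval_sq_eq_norm_euclideanVec_sq, ← sum_sval_sq_eq_norm_euclideanVec_sq, h]

end SingularValues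

/-- **Minimum singular value principle.** If `F` is a nonconstant analytic function on a region
`Ω` and there is a `z₀ ∈ Ω` at which every singular value function `z ↦ s_k(F z)` attains its
minimum over `Ω`, then `F z₀` is not invertible. -/
theorem minimum_singular_values_principle {n : ℕ} (Ω : Set ℂ) (hΩ : IsOpen Ω)
    (hconn : IsConnected Ω) (F : ℂ → Matrix (Fin n) (Fin n) ℂ)
    (hF : ∀ z ∈ Ω, DifferentiableAt ℂ F z)
    (hnc : ¬ ∀ z ∈ Ω, ∀ w ∈ Ω, F z = F w)
    (z₀ : ℂ) (hz₀ : z₀ ∈ Ω)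
    (hmin : ∀ k : Fin n, ∀ z ∈ Ω, sval (F z₀) k ≤ sval (F z) k) :
    ¬ IsUnit (F z₀) := by
  intro hunit
  have hdet₀ : (F z₀).det ≠ 0 := ((Matrix.isUnit_iff_isUnit_det _).1 hunit).ne_zero
  have hdet_const := Complex.eqOn_of_isPreconnected_of_isMinOn_norm hconn.isPreconnected hΩ
    (fun z hz => (hF z hz).matrix_det.differentiableWithinAt) hz₀ hdet₀
    (fun z hz => norm_det_le_of_sval_le fun k => hmin k z hz)
  have hsval_const : ∀ z ∈ Ω, sval (F z₀) = sval (F z) := fun z hz =>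
    sval_eq_of_sval_le_of_norm_det_eq (fun k => hmin k z hz) hdet₀
      (congrArg norm (hdet_const hz).symm)
  have hvec_const := Complex.eqOn_of_isPreconnected_of_isMaxOn_norm hconn.isPreconnected hΩ
    (fun z hz => (hF z hz).matrix_euclideanVec.differentiableWithinAt) hz₀
    (fun z hz => (norm_euclideanVec_eq_of_sval_eq (hsval_const z hz)).ge)
  exact hnc fun z hz w hw =>
    Matrix.euclideanVec_injective ((hvec_const hz).trans (hvec_const hw).symm)
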